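/- arXiv:1708.05042 — 2 statements merged into one kernel-verified Lean document; each statement's English description precedes it below -/
import Mathlib

section
/- Let k be a field and B ⊂ SL₄(k) the upper triangular Borel. Every element of the B-orbit of e₂₃ (under conjugation) has the form v·e₂₃ + x·e₁₃ + y·e₂₄ + z·e₁₄ with v ≠ 0 and v·z − x·y = 0. -/
open Matrix

def borelSubgroup (n : ℕ) (k : Type*) [Field k] : Set (Matrix (Fin n) (Fin n) k) :=
  {b | b.det = 1 ∧ ∀ i j : Fin n, j < i → b i j = 0}

def borelOrbit (n : ℕ) (k : Type*) [Field k] (x : Matrix (Fin n) (Fin n) k) :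
    Set (Matrix (Fin n) (Fin n) k) :=
  {m | ∃ b ∈ borelSubgroup n k, b * x * b⁻¹ = m}

/-!
Conjugating `e₂₃` by `b` gives the rank-one matrix `(b e₂)(e₃ᵀ b⁻¹)`. As `b` and `b⁻¹` are upper
triangular, the column `b e₂` is supported on rows 1, 2 and the row `e₃ᵀ b⁻¹` on columns 3, 4, so
the conjugate lies in the span of `e₁₃, e₁₄, e₂₃, e₂₄` with vanishing `2 × 2` determinant
`v z - x y`. The coefficient `v = b₂₂ (b⁻¹)₃₃` is nonzero since a triangular matrix of determinant
one has no zero on its diagonal. (Indices here are 1-based; `Fin 4` counts from 0.)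
-/

theorem Matrix.mul_single_one_mul_apply {m n l o R : Type*} [Fintype m] [Fintype n]
    [DecidableEq m] [DecidableEq n] [Semiring R] (A : Matrix l m R) (B : Matrix n o R)
    (i : m) (j : n) (p : l) (q : o) :
    (A * single i j (1 : R) * B) p q = A p i * B j q := by
  simp [mul_apply, single_apply, ite_and]

namespace borelSubgroup

variable {n : ℕ} {k : Type*} [Field k] {b : Matrix (Fin n) (Fin n) k}

theorem isUpperTriangular_of_mem (hb : b ∈ borelSubgroup n k) : b.IsUpperTriangular :=
  fun i j h => hb.2 i j h

theorem inv_mem (hb : b ∈ borelSubgroup n k) : b⁻¹ ∈ borelSubgroup n k := by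
  have : Invertible b := invertibleOfIsUnitDet b (hb.1 ▸ isUnit_one)
  refine ⟨by rw [det_nonsing_inv, hb.1, Ring.inverse_one], fun i j h => ?_⟩
  exact blockTriangular_inv_of_blockTriangular (isUpperTriangular_of_mem hb) h

theorem apply_self_ne_zero_of_mem (hb : b ∈ borelSubgroup n k) (i : Fin n) : b i i ≠ 0 := by
  have hprod : ∏ i, b i i ≠ 0 := by
    rw [← det_of_isUpperTriangular (isUpperTriangular_of_mem hb), hb.1]
    exact one_ne_zero
  exact Finset.prod_ne_zero_iff.mp hprod i (Finset.mem_univ i)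

end borelSubgroup

theorem sl4_orbit_e23_subset (k : Type*) [Field k] :
    borelOrbit 4 k (Matrix.single (1 : Fin 4) 2 (1 : k)) ⊆
      {m | ∃ v x y z : k, v ≠ 0 ∧ v * z - x * y = 0 ∧
        m = v • Matrix.single (1 : Fin 4) 2 (1 : k) +
            x • Matrix.single (0 : Fin 4) 2 (1 : k) +
            y • Matrix.single (1 : Fin 4) 3 (1 : k) +
            z • Matrix.single (0 : Fin 4) 3 (1 : k)} := by
  rintro m ⟨b, hb, rfl⟩
  have hb' := borelSubgroup.inv_mem hb
  refine ⟨b 1 1 * b⁻¹ 2 2, b 0 1 * b⁻¹ 2 2, b 1 1 * b⁻¹ 2 3, b 0 1 * b⁻¹ 2 3,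
    mul_ne_zero (borelSubgroup.apply_self_ne_zero_of_mem hb 1)
      (borelSubgroup.apply_self_ne_zero_of_mem hb' 2), by ring, ?_⟩
  ext i j
  rw [mul_single_one_mul_apply]
  fin_cases i <;> fin_cases j <;> simp [hb.2, hb'.2]
end

section
/- Let k be an algebraically closed field and B ⊂ SL₄(k) the upper triangular Borel. The nilradical of the Borel subalgebra of sl₄(k) is the disjoint union of exactly 16 B-orbits under the conjugation action. -/
/-!
Conjugating `x` into `y` by an upper triangular `g` amounts to solving `g * x = y * g`; over an
algebraically closed field `g` only has to be invertible, since rescaling it to determinant one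
does not change the conjugation. For `x = nilMat a b c d e f` and `g = upperMat …` this is six
bilinear equations. They show that `a`, `d`, `f` and, once the appropriate earlier entries
vanish, `b`, `e`, `c`, `a * e + b * f` and `b * e - c * d` are relative invariants: each is
multiplied by a nonzero factor. Splitting the nilradical along the vanishing of these gives
sixteen cases; in each one an explicit intertwiner moves `x` to a `0`/`1` representative, and the
sixteen representatives have pairwise different vanishing patterns.
-/

open Matrix

/-- The nilradical: strictly upper triangular 4×4 matrices. -/
def nilradical4 (k : Type*) [Field k] : Set (Matrix (Fin 4) (Fin 4) k) :=
  {m | ∀ i j : Fin 4, j ≤ i → m i j = 0}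

theorem Matrix.IsUpperTriangular.mul_mul_apply_eq_zero {m R : Type*} [Fintype m] [LinearOrder m]
    [NonUnitalNonAssocSemiring R] {b x c : Matrix m m R} (hb : b.IsUpperTriangular)
    (hc : c.IsUpperTriangular) (hx : ∀ i j, j ≤ i → x i j = 0) {i j : m} (hij : j ≤ i) :
    (b * x * c) i j = 0 := by
  rw [mul_apply]
  refine Finset.sum_eq_zero fun l _ => ?_
  rcases lt_or_ge j l with hjl | hlj
  · rw [hc hjl, mul_zero]
  · rw [mul_apply]
    refine mul_eq_zero_of_left (Finset.sum_eq_zero fun m _ => ?_) _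
    rcases lt_or_ge m i with hmi | him
    · rw [hb hmi, zero_mul]
    · rw [hx m l (hlj.trans (hij.trans him)), mul_zero]

theorem eq_zero_iff_of_mul_eq_mul {M₀ : Type*} [MulZeroClass M₀] [NoZeroDivisors M₀]
    {x y u v : M₀} (hu : u ≠ 0) (hv : v ≠ 0) (h : u * x = y * v) : x = 0 ↔ y = 0 := by
  constructor <;> rintro rfl <;> simp_all

section Borel

variable {n : ℕ} {k : Type*} [Field k]

theorem isUpperTriangular_of_mem_borelSubgroup {b : Matrix (Fin n) (Fin n) k}
    (hb : b ∈ borelSubgroup n k) : b.IsUpperTriangular :=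
  fun i j h => hb.2 i j h

theorem isUnit_det_of_mem_borelSubgroup {b : Matrix (Fin n) (Fin n) k}
    (hb : b ∈ borelSubgroup n k) : IsUnit b.det := by
  rw [hb.1]
  exact isUnit_one

theorem mul_mem_borelSubgroup {b c : Matrix (Fin n) (Fin n) k} (hb : b ∈ borelSubgroup n k)
    (hc : c ∈ borelSubgroup n k) : b * c ∈ borelSubgroup n k :=
  ⟨by rw [det_mul, hb.1, hc.1, one_mul],
    fun _ _ h => ((isUpperTriangular_of_mem_borelSubgroup hb).mul
      (isUpperTriangular_of_mem_borelSubgroup hc)) h⟩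

theorem inv_mem_borelSubgroup {b : Matrix (Fin n) (Fin n) k} (hb : b ∈ borelSubgroup n k) :
    b⁻¹ ∈ borelSubgroup n k := by
  have := b.invertibleOfIsUnitDet (isUnit_det_of_mem_borelSubgroup hb)
  exact ⟨by rw [det_nonsing_inv, hb.1, Ring.inverse_one],
    fun _ _ h => blockTriangular_inv_of_blockTriangular
      (isUpperTriangular_of_mem_borelSubgroup hb) h⟩

theorem mem_borelOrbit_comm {x y : Matrix (Fin n) (Fin n) k} :
    y ∈ borelOrbit n k x ↔ x ∈ borelOrbit n k y := by
  suffices ∀ x y : Matrix (Fin n) (Fin n) k, y ∈ borelOrbit n k x → x ∈ borelOrbit n k y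
    from ⟨this x y, this y x⟩
  rintro x _ ⟨b, hb, rfl⟩
  have hu := isUnit_det_of_mem_borelSubgroup hb
  refine ⟨b⁻¹, inv_mem_borelSubgroup hb, ?_⟩
  rw [nonsing_inv_nonsing_inv _ hu, ← mul_assoc, ← mul_assoc, nonsing_inv_mul _ hu, one_mul,
    mul_assoc, nonsing_inv_mul _ hu, mul_one]

theorem mem_borelOrbit_trans {x y z : Matrix (Fin n) (Fin n) k} (hy : y ∈ borelOrbit n k x)
    (hz : z ∈ borelOrbit n k y) : z ∈ borelOrbit n k x := by
  obtain ⟨b, hb, rfl⟩ := hy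
  obtain ⟨c, hc, rfl⟩ := hz
  exact ⟨c * b, mul_mem_borelSubgroup hc hb, by rw [Matrix.mul_inv_rev]; noncomm_ring⟩

theorem exists_mul_eq_of_mem_borelOrbit {x y : Matrix (Fin n) (Fin n) k}
    (h : y ∈ borelOrbit n k x) : ∃ b ∈ borelSubgroup n k, b * x = y * b := by
  obtain ⟨b, hb, rfl⟩ := h
  exact ⟨b, hb, by rw [nonsing_inv_mul_cancel_right _ _ (isUnit_det_of_mem_borelSubgroup hb)]⟩

/-- `g` is rescaled by an `n`-th root of `(det g)⁻¹`, which leaves the conjugation unchanged. -/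
theorem mem_borelOrbit_of_mul_eq [IsAlgClosed k] [NeZero n] {g x y : Matrix (Fin n) (Fin n) k}
    (hg : g.IsUpperTriangular) (hdet : g.det ≠ 0) (h : g * x = y * g) :
    y ∈ borelOrbit n k x := by
  obtain ⟨t, ht⟩ := IsAlgClosed.exists_pow_nat_eq g.det⁻¹ (Nat.pos_of_neZero n)
  have hb : t • g ∈ borelSubgroup n k :=
    ⟨by rw [det_smul, Fintype.card_fin, ht, inv_mul_cancel₀ hdet],
      fun _ _ hij => by rw [Matrix.smul_apply, hg hij, smul_zero]⟩
  refine ⟨t • g, hb, ?_⟩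
  rw [smul_mul, h, ← Matrix.mul_smul,
    mul_nonsing_inv_cancel_right _ _ (isUnit_det_of_mem_borelSubgroup hb)]

end Borel

section UpperMat

variable {R : Type*}

def nilMat [Zero R] (a b c d e f : R) : Matrix (Fin 4) (Fin 4) R :=
  !![0, a, b, c; 0, 0, d, e; 0, 0, 0, f; 0, 0, 0, 0]

def upperMat [Zero R] (p q r s α β γ δ ε ζ : R) : Matrix (Fin 4) (Fin 4) R :=
  !![p, α, β, γ; 0, q, δ, ε; 0, 0, r, ζ; 0, 0, 0, s]

theorem upperMat_isUpperTriangular [Zero R] (p q r s α β γ δ ε ζ : R) :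
    (upperMat p q r s α β γ δ ε ζ).IsUpperTriangular := by
  intro i j hij
  fin_cases i <;> fin_cases j <;> first | exact absurd hij (by decide) | rfl

theorem eq_upperMat [Zero R] {g : Matrix (Fin 4) (Fin 4) R} (hg : g.IsUpperTriangular) :
    g = upperMat (g 0 0) (g 1 1) (g 2 2) (g 3 3) (g 0 1) (g 0 2) (g 0 3) (g 1 2) (g 1 3)
      (g 2 3) := by
  ext i j
  fin_cases i <;> fin_cases j <;> first | rfl | exact hg (by decide)

theorem det_upperMat [CommRing R] (p q r s α β γ δ ε ζ : R) :
    (upperMat p q r s α β γ δ ε ζ).det = p * q * r * s := by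
  rw [det_of_isUpperTriangular (upperMat_isUpperTriangular ..), Fin.prod_univ_four]
  simp [upperMat, mul_assoc]

theorem upperMat_mul_nilMat_eq_iff [CommRing R]
    {p q r s α β γ δ ε ζ a b c d e f a' b' c' d' e' f' : R} :
    upperMat p q r s α β γ δ ε ζ * nilMat a b c d e f =
        nilMat a' b' c' d' e' f' * upperMat p q r s α β γ δ ε ζ ↔
      p * a = a' * q ∧ p * b + α * d = a' * δ + b' * r ∧
        p * c + α * e + β * f = a' * ε + b' * ζ + c' * s ∧ q * d = d' * r ∧
        q * e + δ * f = d' * ζ + e' * s ∧ r * f = f' * s := by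
  simp [upperMat, nilMat, add_assoc, and_assoc]

end UpperMat

section Nilradical4

variable {k : Type*} [Field k]

theorem nilMat_mem_nilradical4 (a b c d e f : k) : nilMat a b c d e f ∈ nilradical4 k := by
  intro i j hij
  fin_cases i <;> fin_cases j <;> first | exact absurd hij (by decide) | rfl

theorem eq_nilMat_of_mem_nilradical4 {x : Matrix (Fin 4) (Fin 4) k} (hx : x ∈ nilradical4 k) :
    x = nilMat (x 0 1) (x 0 2) (x 0 3) (x 1 2) (x 1 3) (x 2 3) := by
  ext i j
  fin_cases i <;> fin_cases j <;> first | rfl | exact hx _ _ (by decide)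

theorem borelOrbit_subset_nilradical4 {x : Matrix (Fin 4) (Fin 4) k} (hx : x ∈ nilradical4 k) :
    borelOrbit 4 k x ⊆ nilradical4 k := by
  rintro _ ⟨b, hb, rfl⟩ i j hij
  exact (isUpperTriangular_of_mem_borelSubgroup hb).mul_mul_apply_eq_zero
    (isUpperTriangular_of_mem_borelSubgroup (inv_mem_borelSubgroup hb)) hx hij

theorem nilMat_mem_borelOrbit [IsAlgClosed k] {a b c d e f a' b' c' d' e' f' : k}
    (p q r s α β δ ε ζ : k) (hpqrs : p * q * r * s ≠ 0)
    (h01 : p * a = a' * q := by ring) (h02 : p * b + α * d = a' * δ + b' * r := by ring)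
    (h03 : p * c + α * e + β * f = a' * ε + b' * ζ + c' * s := by ring)
    (h12 : q * d = d' * r := by ring) (h13 : q * e + δ * f = d' * ζ + e' * s := by ring)
    (h23 : r * f = f' * s := by ring) :
    nilMat a' b' c' d' e' f' ∈ borelOrbit 4 k (nilMat a b c d e f) :=
  mem_borelOrbit_of_mul_eq (upperMat_isUpperTriangular p q r s α β 0 δ ε ζ)
    (by rwa [det_upperMat]) (upperMat_mul_nilMat_eq_iff.mpr ⟨h01, h02, h03, h12, h13, h23⟩)

theorem exists_of_nilMat_mem_borelOrbit {a b c d e f a' b' c' d' e' f' : k}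
    (h : nilMat a' b' c' d' e' f' ∈ borelOrbit 4 k (nilMat a b c d e f)) :
    ∃ p q r s α β δ ε ζ : k, p * q * r * s ≠ 0 ∧
      p * a = a' * q ∧ p * b + α * d = a' * δ + b' * r ∧
      p * c + α * e + β * f = a' * ε + b' * ζ + c' * s ∧ q * d = d' * r ∧
      q * e + δ * f = d' * ζ + e' * s ∧ r * f = f' * s := by
  obtain ⟨g, hg, hgx⟩ := exists_mul_eq_of_mem_borelOrbit h
  have hg_eq := eq_upperMat (isUpperTriangular_of_mem_borelSubgroup hg)
  rw [hg_eq] at hg hgx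
  refine ⟨_, _, _, _, _, _, _, _, _, ?_, upperMat_mul_nilMat_eq_iff.mp hgx⟩
  rw [← det_upperMat, hg.1]
  exact one_ne_zero

theorem nilMat_invariants_of_mem_borelOrbit {a b c d e f a' b' c' d' e' f' : k}
    (h : nilMat a' b' c' d' e' f' ∈ borelOrbit 4 k (nilMat a b c d e f)) :
    (a = 0 ↔ a' = 0) ∧ (d = 0 ↔ d' = 0) ∧ (f = 0 ↔ f' = 0) ∧
      (a = 0 → d = 0 → (b = 0 ↔ b' = 0)) ∧ (d = 0 → f = 0 → (e = 0 ↔ e' = 0)) ∧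
      (a = 0 → b = 0 → d = 0 → e = 0 → f = 0 → (c = 0 ↔ c' = 0)) ∧
      (d = 0 → (a * e + b * f = 0 ↔ a' * e' + b' * f' = 0)) ∧
      (a = 0 → f = 0 → (b * e - c * d = 0 ↔ b' * e' - c' * d' = 0)) := by
  obtain ⟨p, q, r, s, α, β, δ, ε, ζ, hpqrs, h01, h02, h03, h12, h13, h23⟩ :=
    exists_of_nilMat_mem_borelOrbit h
  simp only [mul_ne_zero_iff] at hpqrs
  obtain ⟨⟨⟨hp, hq⟩, hr⟩, hs⟩ := hpqrs
  have ha := eq_zero_iff_of_mul_eq_mul hp hq h01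
  have hd := eq_zero_iff_of_mul_eq_mul hq hr h12
  have hf := eq_zero_iff_of_mul_eq_mul hr hs h23
  have hb : a = 0 → d = 0 → (b = 0 ↔ b' = 0) := by
    intro ha0 hd0
    obtain ⟨ha0', hd0'⟩ := And.intro (ha.mp ha0) (hd.mp hd0)
    subst ha0 hd0 ha0' hd0'
    exact eq_zero_iff_of_mul_eq_mul hp hr (by linear_combination h02)
  have he : d = 0 → f = 0 → (e = 0 ↔ e' = 0) := by
    intro hd0 hf0
    obtain ⟨hd0', hf0'⟩ := And.intro (hd.mp hd0) (hf.mp hf0)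
    subst hd0 hf0 hd0' hf0'
    exact eq_zero_iff_of_mul_eq_mul hq hs (by linear_combination h13)
  have hc : a = 0 → b = 0 → d = 0 → e = 0 → f = 0 → (c = 0 ↔ c' = 0) := by
    intro ha0 hb0 hd0 he0 hf0
    obtain ⟨hb0', he0'⟩ := And.intro ((hb ha0 hd0).mp hb0) ((he hd0 hf0).mp he0)
    obtain ⟨ha0', hf0'⟩ := And.intro (ha.mp ha0) (hf.mp hf0)
    subst ha0 hb0 hd0 he0 hf0 ha0' hb0' he0' hf0'
    exact eq_zero_iff_of_mul_eq_mul hp hs (by linear_combination h03)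
  have hae : d = 0 → (a * e + b * f = 0 ↔ a' * e' + b' * f' = 0) := by
    intro hd0
    have hd0' := hd.mp hd0
    subst hd0 hd0'
    exact eq_zero_iff_of_mul_eq_mul hp hs
      (by linear_combination e * h01 + a' * h13 + f * h02 + b' * h23)
  -- the determinant of the block `!![b, c; d, e]`, which `g` acts on by two triangular factors
  have hbe : a = 0 → f = 0 → (b * e - c * d = 0 ↔ b' * e' - c' * d' = 0) := by
    intro ha0 hf0
    obtain ⟨ha0', hf0'⟩ := And.intro (ha.mp ha0) (hf.mp hf0)
    subst ha0 hf0 ha0' hf0'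
    exact eq_zero_iff_of_mul_eq_mul (mul_ne_zero hp hq) (mul_ne_zero hr hs)
      (by linear_combination q * e * h02 + b' * r * h13 - q * d * h03 - (b' * ζ + c' * s) * h12)
  exact ⟨ha, hd, hf, hb, he, hc, hae, hbe⟩

def orbitRep : Fin 16 → Matrix (Fin 4) (Fin 4) k :=
  ![nilMat 1 0 0 1 0 1, nilMat 0 0 0 1 0 1, nilMat 1 0 0 1 0 0, nilMat 0 0 0 1 0 0,
    nilMat 0 0 1 1 0 0, nilMat 1 0 0 0 0 1, nilMat 1 1 0 0 0 1, nilMat 0 1 0 0 0 1,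
    nilMat 0 0 0 0 0 1, nilMat 1 0 0 0 1 0, nilMat 1 0 0 0 0 0, nilMat 0 1 0 0 1 0,
    nilMat 0 1 0 0 0 0, nilMat 0 0 0 0 1 0, nilMat 0 0 1 0 0 0, nilMat 0 0 0 0 0 0]

theorem orbitRep_mem_nilradical4 (i : Fin 16) : orbitRep i ∈ nilradical4 k := by
  fin_cases i <;> exact nilMat_mem_nilradical4 _ _ _ _ _ _

theorem eq_of_orbitRep_mem_borelOrbit {i j : Fin 16}
    (h : orbitRep (k := k) i ∈ borelOrbit 4 k (orbitRep j)) : i = j := by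
  fin_cases i <;> fin_cases j <;>
    first | rfl | (have := nilMat_invariants_of_mem_borelOrbit h; norm_num at this)

variable [IsAlgClosed k]

theorem exists_orbitRep_mem_borelOrbit_of_d_ne_zero {a b c d e f : k} (hd : d ≠ 0) :
    ∃ i, orbitRep i ∈ borelOrbit 4 k (nilMat a b c d e f) := by
  rcases eq_or_ne f 0 with rfl | hf <;> rcases eq_or_ne a 0 with rfl | ha
  · rcases eq_or_ne (b * e - c * d) 0 with hbe | hbe
    · exact ⟨3, nilMat_mem_borelOrbit (-d) 1 d 1 b 0 0 0 e (by simpa)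
        (h03 := by linear_combination hbe)⟩
    · exact ⟨4, nilMat_mem_borelOrbit (-d) 1 d (b * e - c * d) b 0 0 0 e (by simp [*])⟩
  · exact ⟨2, nilMat_mem_borelOrbit 1 a (a * d) 1 0 0 b c (a * e) (by simp [*])⟩
  · exact ⟨1, nilMat_mem_borelOrbit (d * f) 1 d (d * f) (-(b * f)) (b * e - c * d) 0 0 e
      (by simp [*])⟩
  · exact ⟨0, nilMat_mem_borelOrbit 1 a (a * d) (a * d * f) 0 0 b c (a * e + b * f)
      (by simp [*])⟩

theorem exists_orbitRep_mem_borelOrbit_of_f_ne_zero {a b c e f : k} (hf : f ≠ 0) :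
    ∃ i, orbitRep i ∈ borelOrbit 4 k (nilMat a b c 0 e f) := by
  rcases eq_or_ne a 0 with rfl | ha
  · rcases eq_or_ne b 0 with rfl | hb
    · exact ⟨8, nilMat_mem_borelOrbit f f 1 f 0 (-c) (-e) 0 0 (by simp [*])⟩
    · exact ⟨7, nilMat_mem_borelOrbit 1 f b (b * f) 0 0 (-e) 0 c (by simp [*])⟩
  · rcases eq_or_ne (a * e + b * f) 0 with hae | hae
    · exact ⟨5, nilMat_mem_borelOrbit f (a * f) 1 f 0 0 (-(a * e)) (c * f) 0 (by simp [*])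
        (h02 := by linear_combination hae)⟩
    · exact ⟨6, nilMat_mem_borelOrbit f (a * f) (a * e + b * f) (f * (a * e + b * f)) 0 0
        (-(a * e)) (c * f) 0 (by simp [*])⟩

theorem exists_orbitRep_mem_borelOrbit_of_d_eq_zero_of_f_eq_zero {a b c e : k} :
    ∃ i, orbitRep i ∈ borelOrbit 4 k (nilMat a b c 0 e 0) := by
  rcases eq_or_ne a 0 with rfl | ha
  · rcases eq_or_ne b 0 with rfl | hb
    · rcases eq_or_ne e 0 with rfl | he
      · rcases eq_or_ne c 0 with rfl | hc
        · exact ⟨15, nilMat_mem_borelOrbit 1 1 1 1 0 0 0 0 0 (by simp)⟩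
        · exact ⟨14, nilMat_mem_borelOrbit 1 1 1 c 0 0 0 0 0 (by simp [*])⟩
      · exact ⟨13, nilMat_mem_borelOrbit e 1 1 e (-c) 0 0 0 0 (by simp [*])⟩
    · rcases eq_or_ne e 0 with rfl | he
      · exact ⟨12, nilMat_mem_borelOrbit 1 1 b 1 0 0 0 0 c (by simp [*])⟩
      · exact ⟨11, nilMat_mem_borelOrbit 1 1 b e 0 0 0 0 c (by simp [*])⟩
  · rcases eq_or_ne e 0 with rfl | he
    · exact ⟨10, nilMat_mem_borelOrbit 1 a 1 1 0 0 b c 0 (by simp [*])⟩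
    · exact ⟨9, nilMat_mem_borelOrbit 1 a 1 (a * e) 0 0 b c 0 (by simp [*])⟩

theorem exists_orbitRep_mem_borelOrbit {x : Matrix (Fin 4) (Fin 4) k} (hx : x ∈ nilradical4 k) :
    ∃ i, orbitRep i ∈ borelOrbit 4 k x := by
  rw [eq_nilMat_of_mem_nilradical4 hx]
  rcases eq_or_ne (x 1 2) 0 with hd | hd
  · rcases eq_or_ne (x 2 3) 0 with hf | hf
    · rw [hd, hf]
      exact exists_orbitRep_mem_borelOrbit_of_d_eq_zero_of_f_eq_zero
    · rw [hd]
      exact exists_orbitRep_mem_borelOrbit_of_f_ne_zero hf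
  · exact exists_orbitRep_mem_borelOrbit_of_d_ne_zero hd

end Nilradical4

theorem sl4_sixteen_orbits (k : Type*) [Field k] [IsAlgClosed k] :
    ∃ reps : Fin 16 → Matrix (Fin 4) (Fin 4) k,
      (∀ i, reps i ∈ nilradical4 k) ∧
      (⋃ i, borelOrbit 4 k (reps i)) = nilradical4 k ∧
      (∀ i j, i ≠ j → borelOrbit 4 k (reps i) ∩ borelOrbit 4 k (reps j) = ∅) := by
  refine ⟨orbitRep, orbitRep_mem_nilradical4, ?_, fun i j hij => ?_⟩
  · refine Set.Subset.antisymm (Set.iUnion_subset fun i =>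
      borelOrbit_subset_nilradical4 (orbitRep_mem_nilradical4 i)) fun x hx => ?_
    obtain ⟨i, hi⟩ := exists_orbitRep_mem_borelOrbit hx
    exact Set.mem_iUnion.mpr ⟨i, mem_borelOrbit_comm.mp hi⟩
  · refine Set.eq_empty_of_forall_notMem fun x ⟨hi, hj⟩ => hij ?_
    exact (eq_of_orbitRep_mem_borelOrbit
      (mem_borelOrbit_trans hi (mem_borelOrbit_comm.mp hj))).symm
end
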